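/- Let x be a random vector in ℝ^n with ‖x‖² ≤ M almost surely, and suppose A = E(x·xᵀ) is positive definite with smallest eigenvalue λ0 > 0. Then E(x·xᵀ·A⁻¹·x·xᵀ) ≼ (M/λ0)·A in the Loewner (positive semidefinite) order, i.e., (M/λ0)·A − E(x·xᵀ·A⁻¹·x·xᵀ) is positive semidefinite. -/

import Mathlib

/-!
Writing `q = xᵀ A⁻¹ x`, the integrand is `x xᵀ A⁻¹ x xᵀ = q • x xᵀ`, and `λ0 • 1 ≼ A` gives
`q ≤ ‖x‖² / λ0 ≤ M / λ0` almost surely. Hence `(M / λ0) • A - E(x xᵀ A⁻¹ x xᵀ)` is the expectation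
of `(M / λ0 - q) • x xᵀ`, which is almost surely positive semidefinite, and taking expectations
preserves positive semidefiniteness.
-/

open Matrix MeasureTheory

namespace Matrix

variable {ι : Type*} [Fintype ι]

theorem vecMulVec_mul_mul_vecMulVec {α : Type*} [CommSemiring α] (u v w x : ι → α)
    (B : Matrix ι ι α) :
    vecMulVec u v * B * vecMulVec w x = (v ⬝ᵥ B *ᵥ w) • vecMulVec u x := by
  rw [Matrix.mul_assoc, mul_vecMulVec, vecMulVec_mul_vecMulVec, vecMulVec_smul]

theorem dotProduct_sq_le_dotProduct_self_mul (a b : ι → ℝ) :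
    (a ⬝ᵥ b) ^ 2 ≤ (a ⬝ᵥ a) * (b ⬝ᵥ b) := by
  simpa [dotProduct, sq] using Finset.sum_mul_sq_le_sq_mul_sq Finset.univ a b

theorem abs_mul_le_dotProduct_self (a : ι → ℝ) (i j : ι) : |a i * a j| ≤ a ⬝ᵥ a := by
  have hsq : ∀ k, a k * a k ≤ a ⬝ᵥ a := fun k =>
    Finset.single_le_sum (f := fun k => a k * a k) (fun k _ => mul_self_nonneg _)
      (Finset.mem_univ k)
  rw [abs_le]
  constructor <;> nlinarith [hsq i, hsq j, sq_nonneg (a i + a j), sq_nonneg (a i - a j)]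

theorem mul_dotProduct_inv_mulVec_le [DecidableEq ι] {A : Matrix ι ι ℝ} (hA : IsUnit A)
    {l : ℝ} (hl : 0 < l) (hlA : ∀ v, l * (v ⬝ᵥ v) ≤ v ⬝ᵥ A *ᵥ v) (a : ι → ℝ) :
    l * (a ⬝ᵥ A⁻¹ *ᵥ a) ≤ a ⬝ᵥ a := by
  set w := A⁻¹ *ᵥ a
  -- `l ‖w‖² ≤ ⟪a, w⟫ ≤ ‖a‖ ‖w‖` by Cauchy–Schwarz, so `l ⟪a, w⟫ ≤ l ‖a‖ ‖w‖ ≤ ‖a‖²`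
  have hw : l * (w ⬝ᵥ w) ≤ a ⬝ᵥ w := by
    simpa [w, mulVec_mulVec, mul_nonsing_inv A ((isUnit_iff_isUnit_det A).1 hA),
      dotProduct_comm a] using hlA w
  have ha : 0 ≤ a ⬝ᵥ a := Fintype.sum_nonneg fun i => mul_self_nonneg (a i)
  rcases le_or_gt (a ⬝ᵥ w) 0 with hq | hq
  · nlinarith
  · have : l * (a ⬝ᵥ w) ^ 2 ≤ (a ⬝ᵥ a) * (a ⬝ᵥ w) := by
      nlinarith [dotProduct_sq_le_dotProduct_self_mul a w, mul_le_mul_of_nonneg_left hw ha]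
    nlinarith

end Matrix

section

variable {Ω ι : Type*} [MeasurableSpace Ω] {μ : Measure Ω} [Fintype ι]

theorem dotProduct_mulVec_integral {F : Ω → Matrix ι ι ℝ}
    (hF : ∀ i j, Integrable (fun ω => F ω i j) μ) (v w : ι → ℝ) :
    v ⬝ᵥ (of fun i j => ∫ ω, F ω i j ∂μ) *ᵥ w = ∫ ω, v ⬝ᵥ F ω *ᵥ w ∂μ := by
  simp only [dotProduct, mulVec, of_apply]
  rw [integral_finsetSum _ fun i _ =>
    (integrable_finsetSum _ fun j _ => (hF i j).mul_const (w j)).const_mul (v i)]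
  refine Finset.sum_congr rfl fun i _ => ?_
  rw [integral_const_mul, integral_finsetSum _ fun j _ => (hF i j).mul_const (w j)]
  simp only [integral_mul_const]

theorem posSemidef_integral {F : Ω → Matrix ι ι ℝ}
    (hF : ∀ i j, Integrable (fun ω => F ω i j) μ) (hpos : ∀ᵐ ω ∂μ, (F ω).PosSemidef) :
    (of fun i j => ∫ ω, F ω i j ∂μ).PosSemidef := by
  refine .of_dotProduct_mulVec_nonneg ?_ fun v => ?_
  · ext i j
    refine integral_congr_ae (hpos.mono fun ω hω => ?_)
    exact congr_fun₂ hω.isHermitian i j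
  · rw [dotProduct_mulVec_integral hF]
    exact integral_nonneg_of_ae (hpos.mono fun ω hω => hω.dotProduct_mulVec_nonneg v)

end

/-- Fourth-moment matrix inequality: for a random vector `x` with `‖x‖² ≤ M` a.s.
and `A = E(x xᵀ)` positive definite with smallest eigenvalue `λ0 > 0`,
`E(x xᵀ A⁻¹ x xᵀ) ≼ (M/λ0) A` in the Loewner order. -/
theorem fourth_moment_loewner_bound {n : ℕ}
    {Ω : Type*} [MeasurableSpace Ω] (μ : Measure Ω) [IsProbabilityMeasure μ]
    (x : Ω → Fin n → ℝ) (hxm : Measurable x)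
    (M : ℝ) (hM : ∀ᵐ ω ∂μ, x ω ⬝ᵥ x ω ≤ M)
    (A : Matrix (Fin n) (Fin n) ℝ)
    (hA : ∀ i j, A i j = ∫ ω, x ω i * x ω j ∂μ)
    (hApd : A.PosDef)
    (lam0 : ℝ) (hlam0 : 0 < lam0)
    (hlo : ∀ v : Fin n → ℝ, lam0 * (v ⬝ᵥ v) ≤ v ⬝ᵥ A *ᵥ v) :
    (((M / lam0) • A) - Matrix.of (fun i j =>
        ∫ ω, (vecMulVec (x ω) (x ω) * A⁻¹ * vecMulVec (x ω) (x ω)) i j ∂μ)).PosSemidef := by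
  set q : Ω → ℝ := fun ω => x ω ⬝ᵥ A⁻¹ *ᵥ x ω
  have hq : ∀ᵐ ω ∂μ, 0 ≤ q ω ∧ q ω ≤ M / lam0 := hM.mono fun ω hω =>
    ⟨by simpa using hApd.inv.posSemidef.dotProduct_mulVec_nonneg (x ω),
      (le_div_iff₀' hlam0).2 ((mul_dotProduct_inv_mulVec_le hApd.isUnit hlam0 hlo (x ω)).trans hω)⟩
  have hxx : ∀ i j, Integrable (fun ω => x ω i * x ω j) μ := fun i j =>
    .of_bound (by fun_prop) M (hM.mono fun ω hω => (abs_mul_le_dotProduct_self (x ω) i j).trans hω)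
  have hqxx : ∀ i j, Integrable (fun ω => q ω * (x ω i * x ω j)) μ := fun i j =>
    (hxx i j).bdd_mul (by fun_prop) (hq.mono fun ω hω => by
      rw [Real.norm_eq_abs, abs_of_nonneg hω.1]; exact hω.2)
  have hE : (M / lam0) • A - of (fun i j =>
        ∫ ω, (vecMulVec (x ω) (x ω) * A⁻¹ * vecMulVec (x ω) (x ω)) i j ∂μ) =
      of fun i j => ∫ ω, ((M / lam0 - q ω) • vecMulVec (x ω) (x ω)) i j ∂μ := by
    ext i j
    simp only [vecMulVec_mul_mul_vecMulVec, Matrix.sub_apply, Matrix.smul_apply, of_apply,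
      vecMulVec_apply, smul_eq_mul, sub_mul]
    rw [integral_sub ((hxx i j).const_mul _) (hqxx i j), integral_const_mul, hA]
  rw [hE]
  refine posSemidef_integral (fun i j => ?_) (hq.mono fun ω hω => ?_)
  · simp only [Matrix.smul_apply, vecMulVec_apply, smul_eq_mul, sub_mul]
    exact ((hxx i j).const_mul _).sub (hqxx i j)
  · simpa using (posSemidef_vecMulVec_self_star (x ω)).smul (sub_nonneg.2 hω.2)
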